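/- Let k1 = k2 = k3 > 0, λ2 > 0, σ ≠ 0, 0 < θ0 < π/2, h > 0, q = 2πn₀/h for a fixed positive integer n₀, and assume the smectic ansatz δρ(z) = t sin(qz) with t ≥ 0, so that the reduced energy of θ ∈ W_θ is F(θ) = ∫₀^h [ k1(θ')² − k1σ²cos²θ + λ2 t² q⁴ sin²(qz)(cos²θ0 − sin²θ)² ] dz. Then: (i) θ ≡ 0 is a critical point of F for every t ≥ 0, with second variation δ²F(θ̄) = 2∫₀^h [ k1(θ̄')² + k1σ²θ̄² − 2λ2t²q⁴ sin²(qz) cos²θ0 · θ̄² ] dz; (ii) if t < t₁ = √(k1σ²/(2λ2q⁴cos²θ0)), then δ²F(θ̄) > 0 for all θ̄ ≠ 0, so θ ≡ 0 is stable; (iii) if t > t₂ = √( 2qh·k1σ² / ((2qh − sin(2qh))·λ2q⁴cos²θ0) ), then the constant perturbation θ̄ ≡ 1 gives δ²F(1) = 2( h k1σ² − (1 − sin(2qh)/(2qh)) λ2 t² q⁴ cos²θ0 · h ) < 0, so θ ≡ 0 is unstable; (iv) among constant functions θ, F is minimized at θ* = arcsin √( max( cos²θ0 − k1hσ² / (λ2t²q⁴(h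 − sin(2qh)/(2q))), 0 ) ). -/

import Mathlib

noncomputable section

open MeasureTheory Filter Topology

/-- The reduced energy of the out-of-plane angle `θ` under the smectic ansatz
`δρ(z) = t sin(qz)`:
`F(θ) = ∫₀ʰ [k₁(θ')² − k₁σ²cos²θ + λ₂t²q⁴sin²(qz)(cos²θ₀ − sin²θ)²] dz`. -/
def Fred (k1 σ lam2 t q θ0 h : ℝ) (th : ℝ → ℝ) : ℝ :=
  ∫ z in (0:ℝ)..h,
    (k1 * (deriv th z) ^ 2 - k1 * σ ^ 2 * Real.cos (th z) ^ 2
      + lam2 * t ^ 2 * q ^ 4 * Real.sin (q * z) ^ 2 *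
          (Real.cos θ0 ^ 2 - Real.sin (th z) ^ 2) ^ 2)

/-- The claimed second variation of `Fred` at `θ ≡ 0`:
`δ²F(θ̄) = 2∫₀ʰ [k₁(θ̄')² + k₁σ²θ̄² − 2λ₂t²q⁴sin²(qz)cos²θ₀·θ̄²] dz`. -/
def d2Fred (k1 σ lam2 t q θ0 h : ℝ) (g : ℝ → ℝ) : ℝ :=
  2 * ∫ z in (0:ℝ)..h,
    (k1 * (deriv g z) ^ 2 + k1 * σ ^ 2 * (g z) ^ 2
      - 2 * lam2 * t ^ 2 * q ^ 4 * Real.sin (q * z) ^ 2 * Real.cos θ0 ^ 2 * (g z) ^ 2)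


open Metric intervalIntegral

section helpers
variable (k1 σ lam2 t q θ0 : ℝ) (g : ℝ → ℝ)

/-- integrand -/
def P1 (s z : ℝ) : ℝ :=
  k1 * (s * deriv g z) ^ 2 - k1 * σ ^ 2 * Real.cos (s * g z) ^ 2
    + lam2 * t ^ 2 * q ^ 4 * Real.sin (q * z) ^ 2 *
        (Real.cos θ0 ^ 2 - Real.sin (s * g z) ^ 2) ^ 2

/-- s-derivative of the integrand -/
def P2 (s z : ℝ) : ℝ :=
  2 * k1 * s * (deriv g z) ^ 2
    + 2 * (k1 * σ ^ 2) * Real.sin (s * g z) * Real.cos (s * g z) * (g z)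
    - 4 * (lam2 * t ^ 2 * q ^ 4 * Real.sin (q * z) ^ 2) *
        (Real.cos θ0 ^ 2 - Real.sin (s * g z) ^ 2) * Real.sin (s * g z) *
          Real.cos (s * g z) * (g z)

/-- second s-derivative of the integrand -/
def P3 (s z : ℝ) : ℝ :=
  2 * k1 * (deriv g z) ^ 2
    + 2 * (k1 * σ ^ 2) * (g z) ^ 2 * (Real.cos (s * g z) ^ 2 - Real.sin (s * g z) ^ 2)
    - 4 * (lam2 * t ^ 2 * q ^ 4 * Real.sin (q * z) ^ 2) * (g z) ^ 2 *
        ((Real.cos θ0 ^ 2 - Real.sin (s * g z) ^ 2) *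
            (Real.cos (s * g z) ^ 2 - Real.sin (s * g z) ^ 2)
          - 2 * Real.sin (s * g z) ^ 2 * Real.cos (s * g z) ^ 2)

variable {g}

lemma cont_P1 (hgc : Continuous g) (hdc : Continuous (deriv g)) (s : ℝ) :
    Continuous fun z => P1 k1 σ lam2 t q θ0 g s z := by
  unfold P1; fun_prop

lemma cont_P2 (hgc : Continuous g) (hdc : Continuous (deriv g)) (s : ℝ) :
    Continuous fun z => P2 k1 σ lam2 t q θ0 g s z := by
  unfold P2; fun_prop

lemma cont_P3 (hgc : Continuous g) (hdc : Continuous (deriv g)) (s : ℝ) :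
    Continuous fun z => P3 k1 σ lam2 t q θ0 g s z := by
  unfold P3; fun_prop

end helpers

lemma abs_le_one_sin (x : ℝ) : |Real.sin x| ≤ 1 :=
  abs_le.2 ⟨Real.neg_one_le_sin x, Real.sin_le_one x⟩

lemma abs_le_one_cos (x : ℝ) : |Real.cos x| ≤ 1 :=
  abs_le.2 ⟨Real.neg_one_le_cos x, Real.cos_le_one x⟩

lemma habs2 {k x y : ℝ} (c : ℝ) (hk : 0 ≤ k) (hx : |x| ≤ 1) (hy : |y| ≤ 1) :
    |k * x * y * c| ≤ k * |c| := by
  have h : |k * x * y * c| = k * |x| * |y| * |c| := by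
    rw [abs_mul, abs_mul, abs_mul, abs_of_nonneg hk]
  rw [h]
  calc k * |x| * |y| * |c| ≤ k * 1 * 1 * |c| := by gcongr <;> positivity
    _ = k * |c| := by ring

lemma habs3 {k w x y : ℝ} (c : ℝ) (hk : 0 ≤ k) (hw : |w| ≤ 1) (hx : |x| ≤ 1) (hy : |y| ≤ 1) :
    |k * w * x * y * c| ≤ k * |c| := by
  have h : |k * w * x * y * c| = k * |w| * |x| * |y| * |c| := by
    rw [abs_mul, abs_mul, abs_mul, abs_mul, abs_of_nonneg hk]
  rw [h]
  calc k * |w| * |x| * |y| * |c| ≤ k * 1 * 1 * 1 * |c| := by gcongr <;> positivity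
    _ = k * |c| := by ring

lemma abs_cos_sq_sub_sin_sq_le_one (u : ℝ) : |Real.cos u ^ 2 - Real.sin u ^ 2| ≤ 1 := by
  refine abs_le.2 ⟨?_, ?_⟩ <;>
    nlinarith [Real.sin_sq_add_cos_sq u, sq_nonneg (Real.sin u), sq_nonneg (Real.cos u)]

lemma abs_C0_sub_sin_sq_le_one (θ0 u : ℝ) : |Real.cos θ0 ^ 2 - Real.sin u ^ 2| ≤ 1 := by
  refine abs_le.2 ⟨?_, ?_⟩ <;>
    nlinarith [Real.sin_sq_le_one u, Real.cos_sq_le_one θ0, sq_nonneg (Real.sin u),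
      sq_nonneg (Real.cos θ0)]

lemma deriv_aux (k1 sq A C0 c d : ℝ) (s : ℝ) :
    HasDerivAt (fun s : ℝ => k1 * (s * d) ^ 2 - sq * Real.cos (s * c) ^ 2
        + A * (C0 - Real.sin (s * c) ^ 2) ^ 2)
      (2 * k1 * s * d ^ 2 + 2 * sq * Real.sin (s * c) * Real.cos (s * c) * c
        - 4 * A * (C0 - Real.sin (s * c) ^ 2) * Real.sin (s * c) * Real.cos (s * c) * c) s := by
  have hsc : HasDerivAt (fun s : ℝ => s * c) c s := hasDerivAt_mul_const c
  have h1 : HasDerivAt (fun s : ℝ => k1 * (s * d) ^ 2) (k1 * (2 * (s * d) ^ 1 * d)) s :=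
    ((hasDerivAt_mul_const d).pow 2).const_mul k1
  have h2 : HasDerivAt (fun s : ℝ => sq * Real.cos (s * c) ^ 2)
      (sq * (2 * Real.cos (s * c) ^ 1 * (-Real.sin (s * c) * c))) s :=
    ((hsc.cos).pow 2).const_mul sq
  have h3 : HasDerivAt (fun s : ℝ => A * (C0 - Real.sin (s * c) ^ 2) ^ 2)
      (A * (2 * (C0 - Real.sin (s * c) ^ 2) ^ 1 *
        (-(2 * Real.sin (s * c) ^ 1 * (Real.cos (s * c) * c))))) s :=
    ((((hsc.sin).pow 2).const_sub C0).pow 2).const_mul A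
  have := (h1.sub h2).add h3
  refine this.congr_deriv ?_
  push_cast
  ring

lemma deriv_aux2 (k1 sq A C0 c d : ℝ) (s : ℝ) :
    HasDerivAt (fun s : ℝ => 2 * k1 * s * d ^ 2
        + 2 * sq * Real.sin (s * c) * Real.cos (s * c) * c
        - 4 * A * (C0 - Real.sin (s * c) ^ 2) * Real.sin (s * c) * Real.cos (s * c) * c)
      (2 * k1 * d ^ 2 + 2 * sq * c ^ 2 * (Real.cos (s * c) ^ 2 - Real.sin (s * c) ^ 2)
        - 4 * A * c ^ 2 * ((C0 - Real.sin (s * c) ^ 2) *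
            (Real.cos (s * c) ^ 2 - Real.sin (s * c) ^ 2)
          - 2 * Real.sin (s * c) ^ 2 * Real.cos (s * c) ^ 2)) s := by
  have hsc : HasDerivAt (fun s : ℝ => s * c) c s := hasDerivAt_mul_const c
  have h1 : HasDerivAt (fun s : ℝ => 2 * k1 * s * d ^ 2) (2 * k1 * d ^ 2) s := by
    have h := ((hasDerivAt_mul_const (d ^ 2)).const_mul (2 * k1) :
      HasDerivAt (fun s : ℝ => 2 * k1 * (s * d ^ 2)) (2 * k1 * d ^ 2) s)
    rw [show (fun s : ℝ => 2 * k1 * s * d ^ 2) = fun y => 2 * k1 * (y * d ^ 2) from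
      funext fun y => by ring]
    exact h
  have h2 := ((hsc.sin.const_mul (2 * sq)).mul hsc.cos).mul_const c
  have h3 := ((((((hsc.sin.pow 2).const_sub C0).const_mul (4 * A)).mul hsc.sin).mul
      hsc.cos).mul_const c)
  have h := (h1.add h2).sub h3
  refine h.congr_deriv ?_
  norm_num only [Pi.mul_apply, Pi.pow_apply]
  push_cast
  ring

lemma key1 (k1 σ lam2 t q θ0 h : ℝ) {g : ℝ → ℝ} (hg : ContDiff ℝ (⊤ : ℕ∞) g)
    (hk1 : 0 ≤ k1) (hl2 : 0 ≤ lam2) (s₀ : ℝ) :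
    HasDerivAt (fun s => ∫ z in (0:ℝ)..h, P1 k1 σ lam2 t q θ0 g s z)
      (∫ z in (0:ℝ)..h, P2 k1 σ lam2 t q θ0 g s₀ z) s₀ := by
  have hgc : Continuous g := hg.continuous
  have hdc : Continuous (deriv g) := hg.continuous_deriv (by simp)
  refine (intervalIntegral.hasDerivAt_integral_of_dominated_loc_of_deriv_le
    (bound := fun z => 2 * k1 * (|s₀| + 1) * (deriv g z) ^ 2
      + (2 * (k1 * σ ^ 2) + 4 * (lam2 * t ^ 2 * q ^ 4)) * |g z|)
    (F' := fun s z => P2 k1 σ lam2 t q θ0 g s z) (Metric.ball_mem_nhds s₀ one_pos)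
    (Eventually.of_forall fun s => ((cont_P1 k1 σ lam2 t q θ0 hgc hdc s).aestronglyMeasurable))
    ((cont_P1 k1 σ lam2 t q θ0 hgc hdc s₀).intervalIntegrable 0 h)
    ((cont_P2 k1 σ lam2 t q θ0 hgc hdc s₀).aestronglyMeasurable)
    (Eventually.of_forall fun z _ x hx => ?_)
    (((by fun_prop : Continuous fun z => 2 * k1 * (|s₀| + 1) * (deriv g z) ^ 2
      + (2 * (k1 * σ ^ 2) + 4 * (lam2 * t ^ 2 * q ^ 4)) * |g z|)).intervalIntegrable 0 h)
    (Eventually.of_forall fun z _ x _ => ?_)).2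
  · -- the bound
    have hx1 : |x| ≤ |s₀| + 1 := by
      have h1 := mem_ball_iff_norm.mp hx
      rw [Real.norm_eq_abs] at h1
      calc |x| = |(x - s₀) + s₀| := by ring_nf
        _ ≤ |x - s₀| + |s₀| := abs_add_le _ _
        _ ≤ |s₀| + 1 := by linarith
    rw [Real.norm_eq_abs]
    unfold P2
    set u := x * g z with hu
    have e1 : |2 * k1 * x * (deriv g z) ^ 2| ≤ 2 * k1 * (|s₀| + 1) * (deriv g z) ^ 2 := by
      have h1 : |2 * k1 * x * (deriv g z) ^ 2|
          = 2 * k1 * |x| * (deriv g z) ^ 2 := by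
        rw [abs_mul, abs_mul, abs_of_nonneg (by positivity : (0:ℝ) ≤ 2 * k1),
          abs_of_nonneg (sq_nonneg (deriv g z))]
      rw [h1]; gcongr
    have e2 : |2 * (k1 * σ ^ 2) * Real.sin u * Real.cos u * (g z)|
        ≤ 2 * (k1 * σ ^ 2) * |g z| :=
      habs2 _ (by positivity) (abs_le_one_sin u) (abs_le_one_cos u)
    have e3 : |4 * (lam2 * t ^ 2 * q ^ 4 * Real.sin (q * z) ^ 2) *
          (Real.cos θ0 ^ 2 - Real.sin u ^ 2) * Real.sin u * Real.cos u * (g z)|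
        ≤ 4 * (lam2 * t ^ 2 * q ^ 4) * |g z| := by
      refine (habs3 _ (by positivity) (abs_C0_sub_sin_sq_le_one θ0 u) (abs_le_one_sin u)
        (abs_le_one_cos u)).trans ?_
      have h4 : (0:ℝ) ≤ lam2 * t ^ 2 * q ^ 4 := by positivity
      apply mul_le_mul_of_nonneg_right _ (abs_nonneg _)
      nlinarith [Real.sin_sq_le_one (q * z), h4]
    calc |2 * k1 * x * (deriv g z) ^ 2
          + 2 * (k1 * σ ^ 2) * Real.sin u * Real.cos u * (g z)
          - 4 * (lam2 * t ^ 2 * q ^ 4 * Real.sin (q * z) ^ 2) *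
              (Real.cos θ0 ^ 2 - Real.sin u ^ 2) * Real.sin u * Real.cos u * (g z)|
        ≤ |2 * k1 * x * (deriv g z) ^ 2
          + 2 * (k1 * σ ^ 2) * Real.sin u * Real.cos u * (g z)|
          + |4 * (lam2 * t ^ 2 * q ^ 4 * Real.sin (q * z) ^ 2) *
              (Real.cos θ0 ^ 2 - Real.sin u ^ 2) * Real.sin u * Real.cos u * (g z)| :=
        abs_sub _ _
      _ ≤ |2 * k1 * x * (deriv g z) ^ 2|
          + |2 * (k1 * σ ^ 2) * Real.sin u * Real.cos u * (g z)|
          + |4 * (lam2 * t ^ 2 * q ^ 4 * Real.sin (q * z) ^ 2) *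
              (Real.cos θ0 ^ 2 - Real.sin u ^ 2) * Real.sin u * Real.cos u * (g z)| := by
        gcongr; exact abs_add_le _ _
      _ ≤ 2 * k1 * (|s₀| + 1) * (deriv g z) ^ 2
          + (2 * (k1 * σ ^ 2) + 4 * (lam2 * t ^ 2 * q ^ 4)) * |g z| := by
        have := abs_nonneg (g z); linarith
  · -- differentiability
    exact deriv_aux k1 (k1 * σ ^ 2) (lam2 * t ^ 2 * q ^ 4 * Real.sin (q * z) ^ 2)
      (Real.cos θ0 ^ 2) (g z) (deriv g z) x

lemma habs_sq {k c2 x : ℝ} (hk : 0 ≤ k) (hc2 : 0 ≤ c2) (hx : |x| ≤ 1) :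
    |k * c2 * x| ≤ k * c2 := by
  rw [abs_mul, abs_mul, abs_of_nonneg hk, abs_of_nonneg hc2]
  calc k * c2 * |x| ≤ k * c2 * 1 := by gcongr
    _ = k * c2 := by ring

lemma absW_le_three (θ0 u : ℝ) :
    |(Real.cos θ0 ^ 2 - Real.sin u ^ 2) * (Real.cos u ^ 2 - Real.sin u ^ 2)
      - 2 * Real.sin u ^ 2 * Real.cos u ^ 2| ≤ 3 := by
  have h1 := abs_C0_sub_sin_sq_le_one θ0 u
  have h2 := abs_cos_sq_sub_sin_sq_le_one u
  have h3 : |(Real.cos θ0 ^ 2 - Real.sin u ^ 2) * (Real.cos u ^ 2 - Real.sin u ^ 2)| ≤ 1 := by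
    rw [abs_mul]
    calc |Real.cos θ0 ^ 2 - Real.sin u ^ 2| * |Real.cos u ^ 2 - Real.sin u ^ 2|
        ≤ 1 * 1 := mul_le_mul h1 h2 (abs_nonneg _) zero_le_one
      _ = 1 := by ring
  have h4 : |2 * Real.sin u ^ 2 * Real.cos u ^ 2| ≤ 2 := by
    rw [abs_of_nonneg (by positivity)]
    nlinarith [Real.sin_sq_le_one u, Real.cos_sq_le_one u, sq_nonneg (Real.sin u),
      sq_nonneg (Real.cos u)]
  calc |(Real.cos θ0 ^ 2 - Real.sin u ^ 2) * (Real.cos u ^ 2 - Real.sin u ^ 2)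
        - 2 * Real.sin u ^ 2 * Real.cos u ^ 2|
      ≤ |(Real.cos θ0 ^ 2 - Real.sin u ^ 2) * (Real.cos u ^ 2 - Real.sin u ^ 2)|
        + |2 * Real.sin u ^ 2 * Real.cos u ^ 2| := abs_sub _ _
    _ ≤ 1 + 2 := add_le_add h3 h4
    _ = 3 := by norm_num

lemma key2 (k1 σ lam2 t q θ0 h : ℝ) {g : ℝ → ℝ} (hg : ContDiff ℝ (⊤ : ℕ∞) g)
    (hk1 : 0 ≤ k1) (hl2 : 0 ≤ lam2) (s₀ : ℝ) :
    HasDerivAt (fun s => ∫ z in (0:ℝ)..h, P2 k1 σ lam2 t q θ0 g s z)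
      (∫ z in (0:ℝ)..h, P3 k1 σ lam2 t q θ0 g s₀ z) s₀ := by
  have hgc : Continuous g := hg.continuous
  have hdc : Continuous (deriv g) := hg.continuous_deriv (by simp)
  refine (intervalIntegral.hasDerivAt_integral_of_dominated_loc_of_deriv_le
    (bound := fun z => 2 * k1 * (deriv g z) ^ 2
      + (2 * (k1 * σ ^ 2) + 12 * (lam2 * t ^ 2 * q ^ 4)) * (g z) ^ 2)
    (F' := fun s z => P3 k1 σ lam2 t q θ0 g s z) (Metric.ball_mem_nhds s₀ one_pos)
    (Eventually.of_forall fun s => ((cont_P2 k1 σ lam2 t q θ0 hgc hdc s).aestronglyMeasurable))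
    ((cont_P2 k1 σ lam2 t q θ0 hgc hdc s₀).intervalIntegrable 0 h)
    ((cont_P3 k1 σ lam2 t q θ0 hgc hdc s₀).aestronglyMeasurable)
    (Eventually.of_forall fun z _ x _ => ?_)
    (((by fun_prop : Continuous fun z => 2 * k1 * (deriv g z) ^ 2
      + (2 * (k1 * σ ^ 2) + 12 * (lam2 * t ^ 2 * q ^ 4)) * (g z) ^ 2)).intervalIntegrable 0 h)
    (Eventually.of_forall fun z _ x _ => ?_)).2
  · rw [Real.norm_eq_abs]
    unfold P3
    set u := x * g z with hu
    have e1 : |2 * k1 * (deriv g z) ^ 2| = 2 * k1 * (deriv g z) ^ 2 :=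
      abs_of_nonneg (by positivity)
    have e2 : |2 * (k1 * σ ^ 2) * (g z) ^ 2 * (Real.cos u ^ 2 - Real.sin u ^ 2)|
        ≤ 2 * (k1 * σ ^ 2) * (g z) ^ 2 :=
      habs_sq (by positivity) (sq_nonneg _) (abs_cos_sq_sub_sin_sq_le_one u)
    have e3 : |4 * (lam2 * t ^ 2 * q ^ 4 * Real.sin (q * z) ^ 2) * (g z) ^ 2 *
          ((Real.cos θ0 ^ 2 - Real.sin u ^ 2) * (Real.cos u ^ 2 - Real.sin u ^ 2)
            - 2 * Real.sin u ^ 2 * Real.cos u ^ 2)|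
        ≤ 12 * (lam2 * t ^ 2 * q ^ 4) * (g z) ^ 2 := by
      rw [abs_mul, abs_mul, abs_of_nonneg (by positivity :
          (0:ℝ) ≤ 4 * (lam2 * t ^ 2 * q ^ 4 * Real.sin (q * z) ^ 2)),
        abs_of_nonneg (sq_nonneg (g z))]
      have h4 : (0:ℝ) ≤ lam2 * t ^ 2 * q ^ 4 := by positivity
      have h5 := absW_le_three θ0 u
      have h6 := abs_nonneg ((Real.cos θ0 ^ 2 - Real.sin u ^ 2) *
        (Real.cos u ^ 2 - Real.sin u ^ 2) - 2 * Real.sin u ^ 2 * Real.cos u ^ 2)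
      nlinarith [mul_nonneg (mul_nonneg h4 (sq_nonneg (g z))) (sub_nonneg.2 h5),
        mul_nonneg (mul_nonneg (mul_nonneg h4 (sq_nonneg (g z))) h6)
          (sub_nonneg.2 (Real.sin_sq_le_one (q * z)))]
    calc |2 * k1 * (deriv g z) ^ 2
          + 2 * (k1 * σ ^ 2) * (g z) ^ 2 * (Real.cos u ^ 2 - Real.sin u ^ 2)
          - 4 * (lam2 * t ^ 2 * q ^ 4 * Real.sin (q * z) ^ 2) * (g z) ^ 2 *
              ((Real.cos θ0 ^ 2 - Real.sin u ^ 2) * (Real.cos u ^ 2 - Real.sin u ^ 2)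
                - 2 * Real.sin u ^ 2 * Real.cos u ^ 2)|
        ≤ |2 * k1 * (deriv g z) ^ 2
            + 2 * (k1 * σ ^ 2) * (g z) ^ 2 * (Real.cos u ^ 2 - Real.sin u ^ 2)|
          + |4 * (lam2 * t ^ 2 * q ^ 4 * Real.sin (q * z) ^ 2) * (g z) ^ 2 *
              ((Real.cos θ0 ^ 2 - Real.sin u ^ 2) * (Real.cos u ^ 2 - Real.sin u ^ 2)
                - 2 * Real.sin u ^ 2 * Real.cos u ^ 2)| := abs_sub _ _
      _ ≤ |2 * k1 * (deriv g z) ^ 2|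
          + |2 * (k1 * σ ^ 2) * (g z) ^ 2 * (Real.cos u ^ 2 - Real.sin u ^ 2)|
          + |4 * (lam2 * t ^ 2 * q ^ 4 * Real.sin (q * z) ^ 2) * (g z) ^ 2 *
              ((Real.cos θ0 ^ 2 - Real.sin u ^ 2) * (Real.cos u ^ 2 - Real.sin u ^ 2)
                - 2 * Real.sin u ^ 2 * Real.cos u ^ 2)| := by
        gcongr; exact abs_add_le _ _
      _ ≤ 2 * k1 * (deriv g z) ^ 2
          + (2 * (k1 * σ ^ 2) + 12 * (lam2 * t ^ 2 * q ^ 4)) * (g z) ^ 2 := by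
        rw [e1] at *; nlinarith [sq_nonneg (g z)]
  · exact deriv_aux2 k1 (k1 * σ ^ 2) (lam2 * t ^ 2 * q ^ 4 * Real.sin (q * z) ^ 2)
      (Real.cos θ0 ^ 2) (g z) (deriv g z) x

set_option maxHeartbeats 1000000 in
/-- (Helical Smectic–Smectic C* transition.)  With `k₁ = k₂ = k₃ > 0`,
`λ₂ > 0`, `σ ≠ 0`, `0 < θ₀ < π/2`, `q = 2πn₀/h`, `t ≥ 0` and the ansatz
`δρ = t sin(qz)`: (i) `θ ≡ 0` is a critical point of `F` for every `t ≥ 0`, with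
(ii) second variation `δ²F` as in `d2Fred`; (iii) if `t < t₁ = √(k₁σ²/(2λ₂q⁴cos²θ₀))`
then `δ²F(θ̄) > 0` for all `θ̄ ≠ 0`, so `θ ≡ 0` is stable; (iv) `δ²F(1)` equals
`2(hk₁σ² − (1 − sin(2qh)/(2qh))λ₂t²q⁴cos²θ₀·h)`, which is negative for `t > t₂`, so
`θ ≡ 0` is unstable; (v) among constant `θ`, `F` is minimized at
`θ* = arcsin √(max(cos²θ₀ − k₁hσ²/(λ₂t²q⁴(h − sin(2qh)/(2q))), 0))`. -/
theorem stmt_19 (k1 σ lam2 t q θ0 h : ℝ) (n0 : ℕ)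
    (hk1 : 0 < k1) (hl2 : 0 < lam2) (hσ : σ ≠ 0)
    (hθ0 : 0 < θ0) (hθ0' : θ0 < Real.pi / 2)
    (hh : 0 < h) (hn0 : 0 < n0) (hq : q = 2 * Real.pi * n0 / h) (ht : 0 ≤ t) :
    -- (i) `θ ≡ 0` is a critical point for every `t ≥ 0`:
    (∀ g : ℝ → ℝ, ContDiff ℝ (⊤ : ℕ∞) g → deriv g 0 = 0 → deriv g h = 0 →
      HasDerivAt (fun s : ℝ => Fred k1 σ lam2 t q θ0 h (fun z => s * g z)) 0 0) ∧
    -- (ii) the second variation at `θ ≡ 0` is `d2Fred`: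
    (∀ g : ℝ → ℝ, ContDiff ℝ (⊤ : ℕ∞) g → deriv g 0 = 0 → deriv g h = 0 →
      iteratedDeriv 2 (fun s : ℝ => Fred k1 σ lam2 t q θ0 h (fun z => s * g z)) 0 =
        d2Fred k1 σ lam2 t q θ0 h g) ∧
    -- (iii) stability for `t < t₁`:
    (t < Real.sqrt (k1 * σ ^ 2 / (2 * lam2 * q ^ 4 * Real.cos θ0 ^ 2)) →
      ∀ g : ℝ → ℝ, DifferentiableOn ℝ g (Set.Icc 0 h) →
        IntervalIntegrable (fun z => (deriv g z) ^ 2) volume 0 h →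
        ¬ Set.EqOn g 0 (Set.Icc 0 h) →
        0 < d2Fred k1 σ lam2 t q θ0 h g) ∧
    -- (iv) value of the second variation at the constant perturbation `θ̄ ≡ 1` ...
    (d2Fred k1 σ lam2 t q θ0 h (fun _ => 1) =
      2 * (h * k1 * σ ^ 2
        - (1 - Real.sin (2 * q * h) / (2 * q * h)) * lam2 * t ^ 2 * q ^ 4 *
            Real.cos θ0 ^ 2 * h)) ∧
    -- ... which is negative for `t > t₂` (instability):
    (Real.sqrt (2 * q * h * k1 * σ ^ 2 /
        ((2 * q * h - Real.sin (2 * q * h)) * lam2 * q ^ 4 * Real.cos θ0 ^ 2)) < t →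
      2 * (h * k1 * σ ^ 2
        - (1 - Real.sin (2 * q * h) / (2 * q * h)) * lam2 * t ^ 2 * q ^ 4 *
            Real.cos θ0 ^ 2 * h) < 0) ∧
    -- (v) among constants, `F` is minimized at the optimal tilt `θ*`:
    (0 < t → ∀ c ∈ Set.Icc (-(Real.pi / 2)) (Real.pi / 2),
      Fred k1 σ lam2 t q θ0 h
          (fun _ => Real.arcsin (Real.sqrt (max
            (Real.cos θ0 ^ 2 - k1 * h * σ ^ 2 /
              (lam2 * t ^ 2 * q ^ 4 * (h - Real.sin (2 * q * h) / (2 * q)))) 0))) ≤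
        Fred k1 σ lam2 t q θ0 h (fun _ => c)) := by
  have hπ := Real.pi_pos
  have hn0' : (0:ℝ) < n0 := by exact_mod_cast hn0
  have hq0 : 0 < q := by rw [hq]; apply div_pos; positivity; exact hh
  have hq4 : 0 < q ^ 4 := pow_pos hq0 4
  have hcos0 : 0 < Real.cos θ0 := Real.cos_pos_of_mem_Ioo ⟨by linarith, hθ0'⟩
  have hC0pos : 0 < Real.cos θ0 ^ 2 := by positivity
  have hC0le : Real.cos θ0 ^ 2 ≤ 1 := Real.cos_sq_le_one θ0
  have hσ2 : 0 < σ ^ 2 := lt_of_le_of_ne (sq_nonneg σ) (Ne.symm (pow_ne_zero 2 hσ))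
  have hsinqh : Real.sin (q * h) = 0 := by
    have e : q * h = ((2 * n0 : ℕ) : ℝ) * Real.pi := by rw [hq]; field_simp; push_cast; ring
    rw [e, Real.sin_nat_mul_pi]
  have hsin2qh : Real.sin (2 * q * h) = 0 := by
    have e : 2 * q * h = ((4 * n0 : ℕ) : ℝ) * Real.pi := by
      rw [hq]; field_simp; push_cast; ring
    rw [e, Real.sin_nat_mul_pi]
  have Jsin : (∫ z in (0:ℝ)..h, Real.sin (q * z) ^ 2) = h / 2 := by
    rw [intervalIntegral.integral_comp_mul_left (fun x => Real.sin x ^ 2) (ne_of_gt hq0)]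
    rw [integral_sin_sq]
    rw [mul_zero, Real.sin_zero, hsinqh]
    rw [smul_eq_mul]
    field_simp
    ring
  have Fconst : ∀ c : ℝ, Fred k1 σ lam2 t q θ0 h (fun _ => c)
      = -(k1 * σ ^ 2 * Real.cos c ^ 2) * h
        + lam2 * t ^ 2 * q ^ 4 * (Real.cos θ0 ^ 2 - Real.sin c ^ 2) ^ 2 * (h / 2) := by
    intro c
    have e1 : Fred k1 σ lam2 t q θ0 h (fun _ => c)
        = ∫ z in (0:ℝ)..h, (-(k1 * σ ^ 2 * Real.cos c ^ 2)
            + (lam2 * t ^ 2 * q ^ 4 * (Real.cos θ0 ^ 2 - Real.sin c ^ 2) ^ 2) *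
                Real.sin (q * z) ^ 2) := by
      simp only [Fred]
      apply intervalIntegral.integral_congr
      intro z _
      simp only [deriv_const']
      ring
    rw [e1, intervalIntegral.integral_add intervalIntegrable_const
        (Continuous.intervalIntegrable (by fun_prop) _ _),
      intervalIntegral.integral_const, intervalIntegral.integral_const_mul, Jsin]
    simp [smul_eq_mul]
    ring
  refine ⟨?_, ?_, ?_, ?_, ?_, ?_⟩
  · -- (i)
    intro g hg _ _
    have hFeq : (fun s : ℝ => Fred k1 σ lam2 t q θ0 h (fun z => s * g z))
        = fun s => ∫ z in (0:ℝ)..h, P1 k1 σ lam2 t q θ0 g s z := by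
      funext s
      simp only [Fred, P1]
      apply intervalIntegral.integral_congr
      intro z _
      simp only
      rw [deriv_const_mul s (hg.differentiable (by simp) z)]
    rw [hFeq]
    have h0 : (∫ z in (0:ℝ)..h, P2 k1 σ lam2 t q θ0 g 0 z) = 0 := by
      have e : (fun z => P2 k1 σ lam2 t q θ0 g 0 z) = fun _ => (0:ℝ) := by
        funext z; simp [P2]
      rw [e]; simp
    have hk := key1 k1 σ lam2 t q θ0 h hg hk1.le hl2.le 0
    rwa [h0] at hk
  · -- (ii)
    intro g hg _ _
    have hFeq : (fun s : ℝ => Fred k1 σ lam2 t q θ0 h (fun z => s * g z))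
        = fun s => ∫ z in (0:ℝ)..h, P1 k1 σ lam2 t q θ0 g s z := by
      funext s
      simp only [Fred, P1]
      apply intervalIntegral.integral_congr
      intro z _
      simp only
      rw [deriv_const_mul s (hg.differentiable (by simp) z)]
    rw [hFeq]
    rw [iteratedDeriv_succ, iteratedDeriv_one]
    have hd1 : deriv (fun s => ∫ z in (0:ℝ)..h, P1 k1 σ lam2 t q θ0 g s z)
        = fun s => ∫ z in (0:ℝ)..h, P2 k1 σ lam2 t q θ0 g s z :=
      funext fun s => (key1 k1 σ lam2 t q θ0 h hg hk1.le hl2.le s).deriv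
    rw [hd1, (key2 k1 σ lam2 t q θ0 h hg hk1.le hl2.le 0).deriv]
    simp only [d2Fred]
    rw [← intervalIntegral.integral_const_mul]
    apply intervalIntegral.integral_congr
    intro z _
    simp only [P3, zero_mul, Real.sin_zero, Real.cos_zero]
    ring
  · -- (iii)
    intro ht1 g hgd hgint hgne
    have hgc : ContinuousOn g (Set.Icc 0 h) := hgd.continuousOn
    have hR : 0 < k1 * σ ^ 2 / (2 * lam2 * q ^ 4 * Real.cos θ0 ^ 2) :=
      div_pos (by positivity) (by positivity)
    have ht2' : t ^ 2 < k1 * σ ^ 2 / (2 * lam2 * q ^ 4 * Real.cos θ0 ^ 2) := by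
      have := Real.sq_sqrt hR.le
      nlinarith [Real.sqrt_nonneg (k1 * σ ^ 2 / (2 * lam2 * q ^ 4 * Real.cos θ0 ^ 2))]
    have hc0 : 0 < k1 * σ ^ 2 - 2 * lam2 * t ^ 2 * q ^ 4 * Real.cos θ0 ^ 2 := by
      have hd : 0 < 2 * lam2 * q ^ 4 * Real.cos θ0 ^ 2 := by positivity
      have h2 := (lt_div_iff₀ hd).mp ht2'
      nlinarith [h2]
    have huIcc : Set.uIcc (0:ℝ) h = Set.Icc 0 h := Set.uIcc_of_le hh.le
    have hg2int : IntervalIntegrable (fun z => (g z) ^ 2) volume 0 h := by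
      apply ContinuousOn.intervalIntegrable
      rw [huIcc]; exact hgc.pow 2
    have hf1int : IntervalIntegrable (fun z => k1 * (deriv g z) ^ 2) volume 0 h :=
      hgint.const_mul k1
    have hf2int : IntervalIntegrable (fun z => k1 * σ ^ 2 * (g z) ^ 2
        - 2 * lam2 * t ^ 2 * q ^ 4 * Real.sin (q * z) ^ 2 * Real.cos θ0 ^ 2 * (g z) ^ 2)
        volume 0 h := by
      apply ContinuousOn.intervalIntegrable
      rw [huIcc]; fun_prop
    -- positivity of ∫ g²
    obtain ⟨z₀, hz₀mem, hz₀⟩ : ∃ z₀ ∈ Set.Icc (0:ℝ) h, g z₀ ≠ 0 := by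
      by_contra hcon
      push_neg at hcon
      exact hgne fun z hz => by simpa using hcon z hz
    have hcont := hgc z₀ hz₀mem
    rw [Metric.continuousWithinAt_iff] at hcont
    obtain ⟨δ, hδ0, hδ⟩ := hcont (|g z₀| / 2) (by have := abs_pos.2 hz₀; positivity)
    have hz₀0 := hz₀mem.1
    have hz₀h := hz₀mem.2
    set a := max 0 (z₀ - δ / 2) with hadef
    set b := min h (z₀ + δ / 2) with hbdef
    have hab : a < b :=
      max_lt (lt_min hh (by linarith)) (lt_min (by linarith) (by linarith))
    have hsub : Set.Ioo a b ⊆ Function.support (fun z => (g z) ^ 2) ∩ Set.Ioc 0 h := by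
      intro z hz
      have ha0 : (0:ℝ) ≤ a := le_max_left _ _
      have hbh : b ≤ h := min_le_left _ _
      have haz : z₀ - δ / 2 ≤ a := le_max_right _ _
      have hbz : b ≤ z₀ + δ / 2 := min_le_right _ _
      have hzIcc : z ∈ Set.Icc (0:ℝ) h := ⟨by linarith [hz.1], by linarith [hz.2]⟩
      have hdist : dist z z₀ < δ := by
        rw [Real.dist_eq, abs_lt]
        exact ⟨by linarith [hz.1], by linarith [hz.2]⟩
      have hnear := hδ hzIcc hdist
      rw [Real.dist_eq] at hnear
      have hgz : g z ≠ 0 := by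
        intro h0
        rw [h0, zero_sub, abs_neg] at hnear
        linarith [abs_pos.2 hz₀]
      exact ⟨pow_ne_zero 2 hgz, ⟨lt_of_le_of_lt ha0 hz.1, by linarith [hz.2]⟩⟩
    have hg2pos : 0 < ∫ z in (0:ℝ)..h, (g z) ^ 2 := by
      refine (intervalIntegral.integral_pos_iff_support_of_nonneg_ae'
        (ae_of_all _ fun z => sq_nonneg _) hg2int).2 ⟨hh, ?_⟩
      calc (0:ENNReal) < volume (Set.Ioo a b) := by
            rw [Real.volume_Ioo]; exact ENNReal.ofReal_pos.2 (by linarith)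
        _ ≤ volume (Function.support (fun z => (g z) ^ 2) ∩ Set.Ioc 0 h) :=
            measure_mono hsub
    -- assemble
    have hsplit : (∫ z in (0:ℝ)..h,
          (k1 * (deriv g z) ^ 2 + k1 * σ ^ 2 * (g z) ^ 2
            - 2 * lam2 * t ^ 2 * q ^ 4 * Real.sin (q * z) ^ 2 * Real.cos θ0 ^ 2 * (g z) ^ 2))
        = (∫ z in (0:ℝ)..h, k1 * (deriv g z) ^ 2)
          + ∫ z in (0:ℝ)..h, (k1 * σ ^ 2 * (g z) ^ 2
            - 2 * lam2 * t ^ 2 * q ^ 4 * Real.sin (q * z) ^ 2 * Real.cos θ0 ^ 2 * (g z) ^ 2) := by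
      rw [← intervalIntegral.integral_add hf1int hf2int]
      apply intervalIntegral.integral_congr
      intro z _
      ring
    have h1 : 0 ≤ ∫ z in (0:ℝ)..h, k1 * (deriv g z) ^ 2 :=
      intervalIntegral.integral_nonneg hh.le fun u _ => by positivity
    have h2 : (∫ z in (0:ℝ)..h,
          (k1 * σ ^ 2 - 2 * lam2 * t ^ 2 * q ^ 4 * Real.cos θ0 ^ 2) * (g z) ^ 2)
        ≤ ∫ z in (0:ℝ)..h, (k1 * σ ^ 2 * (g z) ^ 2
            - 2 * lam2 * t ^ 2 * q ^ 4 * Real.sin (q * z) ^ 2 * Real.cos θ0 ^ 2 * (g z) ^ 2) := by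
      apply intervalIntegral.integral_mono_on hh.le (hg2int.const_mul _) hf2int
      intro z _
      nlinarith [mul_nonneg (mul_nonneg
          (by positivity : (0:ℝ) ≤ 2 * lam2 * t ^ 2 * q ^ 4 * Real.cos θ0 ^ 2)
          (sq_nonneg (g z))) (sub_nonneg.2 (Real.sin_sq_le_one (q * z)))]
    have h3 : (∫ z in (0:ℝ)..h,
          (k1 * σ ^ 2 - 2 * lam2 * t ^ 2 * q ^ 4 * Real.cos θ0 ^ 2) * (g z) ^ 2)
        = (k1 * σ ^ 2 - 2 * lam2 * t ^ 2 * q ^ 4 * Real.cos θ0 ^ 2)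
          * ∫ z in (0:ℝ)..h, (g z) ^ 2 :=
      intervalIntegral.integral_const_mul _ _
    simp only [d2Fred]
    rw [hsplit]
    nlinarith [mul_pos hc0 hg2pos, h3, h2, h1]
  · -- (iv)
    rw [hsin2qh]
    have e1 : d2Fred k1 σ lam2 t q θ0 h (fun _ => 1)
        = 2 * (k1 * σ ^ 2 * h
            + -(2 * lam2 * t ^ 2 * q ^ 4 * Real.cos θ0 ^ 2) * (h / 2)) := by
      simp only [d2Fred]
      congr 1
      have e2 : (∫ z in (0:ℝ)..h,
            (k1 * (deriv (fun _ : ℝ => (1:ℝ)) z) ^ 2 + k1 * σ ^ 2 * (1:ℝ) ^ 2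
              - 2 * lam2 * t ^ 2 * q ^ 4 * Real.sin (q * z) ^ 2 * Real.cos θ0 ^ 2 * (1:ℝ) ^ 2))
          = ∫ z in (0:ℝ)..h, (k1 * σ ^ 2
              + -(2 * lam2 * t ^ 2 * q ^ 4 * Real.cos θ0 ^ 2) * Real.sin (q * z) ^ 2) := by
        apply intervalIntegral.integral_congr
        intro z _
        simp only [deriv_const']
        ring
      rw [e2, intervalIntegral.integral_add intervalIntegrable_const
          (Continuous.intervalIntegrable (by fun_prop) _ _),
        intervalIntegral.integral_const, intervalIntegral.integral_const_mul, Jsin]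
      rw [smul_eq_mul]
      ring
    rw [e1]
    ring
  · -- (iv) negativity
    intro ht2
    rw [hsin2qh, sub_zero] at ht2
    have h1 : 2 * q * h * k1 * σ ^ 2 / (2 * q * h * lam2 * q ^ 4 * Real.cos θ0 ^ 2)
        < t ^ 2 := by
      have ht0 : 0 < t := lt_of_le_of_lt (Real.sqrt_nonneg _) ht2
      exact (Real.sqrt_lt' ht0).mp ht2
    have h2 : 2 * q * h * k1 * σ ^ 2
        < t ^ 2 * (2 * q * h * lam2 * q ^ 4 * Real.cos θ0 ^ 2) :=
      (div_lt_iff₀ (by positivity)).mp h1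
    rw [hsin2qh, zero_div]
    nlinarith [h2, mul_pos hq0 hh]
  · -- (v)
    intro ht0 c hc
    rw [Fconst, Fconst, hsin2qh, zero_div, sub_zero]
    set D := k1 * h * σ ^ 2 / (lam2 * t ^ 2 * q ^ 4 * h) with hDdef
    have hBh : 0 < lam2 * t ^ 2 * q ^ 4 * h := by positivity
    have hD0 : 0 ≤ D := le_of_lt (div_pos (by positivity) hBh)
    have hDmul : D * (lam2 * t ^ 2 * q ^ 4 * h) = k1 * h * σ ^ 2 :=
      div_mul_cancel₀ _ (ne_of_gt hBh)
    have hx0 : 0 ≤ Real.sin c ^ 2 := sq_nonneg _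
    have hx1 : Real.sin c ^ 2 ≤ 1 := Real.sin_sq_le_one c
    set m := max (Real.cos θ0 ^ 2 - D) 0 with hmdef
    have hm0 : 0 ≤ m := le_max_right _ _
    have hm1 : m ≤ 1 := max_le (by linarith) zero_le_one
    have hsq1 : Real.sqrt m ≤ 1 := by
      have := Real.sqrt_le_sqrt hm1
      rwa [Real.sqrt_one] at this
    have hsinm : Real.sin (Real.arcsin (Real.sqrt m)) = Real.sqrt m :=
      Real.sin_arcsin (by linarith [Real.sqrt_nonneg m]) hsq1
    have hsin2m : Real.sin (Real.arcsin (Real.sqrt m)) ^ 2 = m := by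
      rw [hsinm, Real.sq_sqrt hm0]
    have hcos2m : Real.cos (Real.arcsin (Real.sqrt m)) ^ 2 = 1 - m := by
      rw [Real.cos_sq', hsin2m]
    have hcos2c : Real.cos c ^ 2 = 1 - Real.sin c ^ 2 := Real.cos_sq' c
    rw [hsin2m, hcos2m, hcos2c]
    rcases le_or_gt (Real.cos θ0 ^ 2 - D) 0 with hcase | hcase
    · have hm : m = 0 := max_eq_right hcase
      rw [hm]
      have hkey : Real.cos θ0 ^ 2 * (lam2 * t ^ 2 * q ^ 4 * h) ≤ k1 * h * σ ^ 2 := by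
        have hCD : Real.cos θ0 ^ 2 ≤ D := by linarith
        calc Real.cos θ0 ^ 2 * (lam2 * t ^ 2 * q ^ 4 * h)
            ≤ D * (lam2 * t ^ 2 * q ^ 4 * h) :=
              mul_le_mul_of_nonneg_right hCD hBh.le
          _ = k1 * h * σ ^ 2 := hDmul
      nlinarith [mul_nonneg hx0 (sub_nonneg.2 hkey),
        mul_nonneg (mul_nonneg hBh.le hx0) hx0]
    · have hm : m = Real.cos θ0 ^ 2 - D := max_eq_left hcase.le
      rw [hm]
      nlinarith [mul_nonneg hBh.le
          (sq_nonneg (Real.sin c ^ 2 - (Real.cos θ0 ^ 2 - D))), hDmul]
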